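/- Let (X_k) be r independent Bernoulli(f) random variables (0 < f < 1) on a finite probability space, counting rounds in which a particle is delayed, and let q satisfy f ≤ q ≤ 1. Then P(∑_k X_k > q·r) ≤ ((f·e/q)^q / e^f)^r. -/

import Mathlib

/-!
Chernoff's method: for `t ≥ 0`, `P(S ≥ a) ≤ e^{-ta} E[e^{tS}]`, and by independence the moment
generating function of `S = ∑ X_k` factors. A `{0,1}`-valued `X` with `P(X = 1) = p` satisfies
`e^{tX} = 1 + (e^t - 1) X`, so `E[e^{tX}] = 1 + p (e^t - 1) ≤ exp (p (e^t - 1))`. The choice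
`t = log (q/p)` turns `exp (-t q r + r p (e^t - 1))` into `((p e / q)^q / e^p)^r`.
-/

open MeasureTheory ProbabilityTheory Real

namespace ProbabilityTheory

variable {Ω : Type*} [MeasurableSpace Ω] {μ : Measure Ω}

section ZeroOne

variable {X : Ω → ℝ}

lemma integrable_of_forall_eq_zero_or_eq_one [IsFiniteMeasure μ] (hX : Measurable X)
    (h01 : ∀ ω, X ω = 0 ∨ X ω = 1) : Integrable X μ :=
  (integrable_const (1 : ℝ)).mono' hX.aestronglyMeasurable <|
    .of_forall fun ω => by rcases h01 ω with h | h <;> simp [h]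

lemma integral_of_forall_eq_zero_or_eq_one (hX : Measurable X)
    (h01 : ∀ ω, X ω = 0 ∨ X ω = 1) : μ[X] = μ.real {ω | X ω = 1} := by
  have hX_eq : X = {ω | X ω = 1}.indicator 1 := by
    funext ω
    rcases h01 ω with h | h <;> simp [Set.indicator, h]
  nth_rw 1 [hX_eq]
  exact integral_indicator_one (hX (measurableSet_singleton 1))

lemma mgf_of_forall_eq_zero_or_eq_one [IsProbabilityMeasure μ] (hX : Measurable X)
    (h01 : ∀ ω, X ω = 0 ∨ X ω = 1) (t : ℝ) :
    mgf X μ t = 1 + μ.real {ω | X ω = 1} * (exp t - 1) := by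
  have h_exp : (fun ω => exp (t * X ω)) = fun ω => 1 + (exp t - 1) * X ω := by
    funext ω
    rcases h01 ω with h | h <;> simp [h]
  rw [mgf, h_exp, integral_add (integrable_const 1)
    ((integrable_of_forall_eq_zero_or_eq_one hX h01).const_mul _), integral_const_mul,
    integral_of_forall_eq_zero_or_eq_one hX h01]
  simp [mul_comm]

lemma mgf_le_exp_of_forall_eq_zero_or_eq_one [IsProbabilityMeasure μ] (hX : Measurable X)
    (h01 : ∀ ω, X ω = 0 ∨ X ω = 1) (t : ℝ) :
    mgf X μ t ≤ exp (μ.real {ω | X ω = 1} * (exp t - 1)) := by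
  rw [mgf_of_forall_eq_zero_or_eq_one hX h01, add_comm]
  exact add_one_le_exp _

end ZeroOne

variable {ι : Type*} [Fintype ι] {X : ι → Ω → ℝ} {p : ℝ}

lemma measure_sum_ge_le_of_forall_eq_zero_or_eq_one (hind : iIndepFun X μ)
    (hX : ∀ i, Measurable (X i)) (h01 : ∀ i ω, X i ω = 0 ∨ X i ω = 1)
    (hp : ∀ i, μ.real {ω | X i ω = 1} = p) (a : ℝ) {t : ℝ} (ht : 0 ≤ t) :
    μ.real {ω | a ≤ ∑ i, X i ω} ≤ exp (-t * a + Fintype.card ι * (p * (exp t - 1))) := by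
  have := hind.isProbabilityMeasure
  have h_int : Integrable (fun ω => exp (t * ∑ i, X i ω)) μ := by
    simpa using hind.integrable_exp_mul_sum (t := t) hX (s := Finset.univ) fun i _ =>
      (integrable_const (exp t)).mono' ((hX i).const_mul t).exp.aestronglyMeasurable <|
        .of_forall fun ω => by rcases h01 i ω with h | h <;> simp [h, ht]
  have h_mgf : mgf (fun ω => ∑ i, X i ω) μ t ≤ exp (p * (exp t - 1)) ^ Fintype.card ι := by
    have h_sum : (fun ω => ∑ i, X i ω) = ∑ i, X i := by funext ω; simp
    rw [h_sum, hind.mgf_sum hX, ← Finset.card_univ, ← Finset.prod_const]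
    exact Finset.prod_le_prod (fun i _ => mgf_nonneg) fun i _ =>
      hp i ▸ mgf_le_exp_of_forall_eq_zero_or_eq_one (hX i) (h01 i) t
  calc μ.real {ω | a ≤ ∑ i, X i ω}
      ≤ exp (-t * a) * mgf (fun ω => ∑ i, X i ω) μ t := measure_ge_le_exp_mul_mgf a ht h_int
    _ ≤ exp (-t * a) * exp (p * (exp t - 1)) ^ Fintype.card ι := by gcongr
    _ = exp (-t * a + Fintype.card ι * (p * (exp t - 1))) := by rw [← exp_nat_mul, exp_add]

theorem measure_sum_ge_le_of_forall_eq_zero_or_eq_one_of_le {q : ℝ} (hind : iIndepFun X μ)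
    (hX : ∀ i, Measurable (X i)) (h01 : ∀ i ω, X i ω = 0 ∨ X i ω = 1)
    (hp : ∀ i, μ.real {ω | X i ω = 1} = p) (hp0 : 0 < p) (hpq : p ≤ q) :
    μ.real {ω | q * Fintype.card ι ≤ ∑ i, X i ω} ≤
      ((p * exp 1 / q) ^ q / exp p) ^ Fintype.card ι := by
  have hq0 : 0 < q := hp0.trans_le hpq
  set n := Fintype.card ι
  have h_exponent : exp (-log (q / p) * (q * n) + n * (p * (exp (log (q / p)) - 1))) =
      ((p * exp 1 / q) ^ q / exp p) ^ n := by
    rw [exp_log (by positivity), rpow_def_of_pos (by positivity), log_div (by positivity) hq0.ne',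
      log_mul hp0.ne' (exp_pos 1).ne', log_exp, log_div hq0.ne' hp0.ne', ← exp_sub,
      ← exp_nat_mul]
    congr 1
    field_simp
    ring
  rw [← h_exponent]
  exact measure_sum_ge_le_of_forall_eq_zero_or_eq_one hind hX h01 hp _
    (log_nonneg ((one_le_div hp0).mpr hpq))

end ProbabilityTheory

theorem stmt_17_general {Ω : Type*} [MeasurableSpace Ω]
    (μ : Measure Ω) [IsProbabilityMeasure μ]
    (r : ℕ) (f q : ℝ) (hf0 : 0 < f)
    (hfq : f ≤ q)
    (X : Fin r → Ω → ℝ)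
    (hmeas : ∀ k, Measurable (X k))
    (hBool : ∀ k ω, X k ω = 0 ∨ X k ω = 1)
    (hBern : ∀ k, μ {ω | X k ω = 1} = ENNReal.ofReal f)
    (hind : iIndepFun X μ) :
    (μ {ω | q * r < ∑ k, X k ω}).toReal ≤
      ((f * Real.exp 1 / q) ^ q / Real.exp f) ^ r := by
  have hp : ∀ k, μ.real {ω | X k ω = 1} = f := fun k => by
    rw [measureReal_def, hBern k, ENNReal.toReal_ofReal hf0.le]
  have h_chernoff := measure_sum_ge_le_of_forall_eq_zero_or_eq_one_of_le hind hmeas hBool hp hf0 hfq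
  rw [Fintype.card_fin] at h_chernoff
  exact (measureReal_mono fun ω (h : q * r < ∑ k, X k ω) => h.le).trans h_chernoff

/-- Chernoff bound on the number of delayed rounds: for r independent
Bernoulli(f) indicators X_k and f ≤ q ≤ 1, the probability that more than
qr of the rounds see a delay is at most ((fe/q)^q / e^f)^r. -/
theorem stmt_17 {Ω : Type*} [Fintype Ω] [MeasurableSpace Ω]
    (μ : Measure Ω) [IsProbabilityMeasure μ]
    (r : ℕ) (f q : ℝ) (hf0 : 0 < f) (hf1 : f < 1)
    (hfq : f ≤ q) (hq1 : q ≤ 1)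
    (X : Fin r → Ω → ℝ)
    (hmeas : ∀ k, Measurable (X k))
    (hBool : ∀ k ω, X k ω = 0 ∨ X k ω = 1)
    (hBern : ∀ k, μ {ω | X k ω = 1} = ENNReal.ofReal f)
    (hind : iIndepFun X μ) :
    (μ {ω | q * r < ∑ k, X k ω}).toReal ≤
      ((f * Real.exp 1 / q) ^ q / Real.exp f) ^ r :=
  stmt_17_general μ r f q hf0 hfq X hmeas hBool hBern hind
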